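/- Let P₇ be the path graph on vertex set {1,2,3,4,5,6,7} with edges {i, i+1} for i = 1,…,6. Then λ({2,4,6}) = 1 and λ({3,4,5}) = (3 − √5)/2, so λ({2,4,6}) > λ({3,4,5}); moreover, λ(S) ≤ λ({2,4,6}) for every three-element subset S of {1,…,7}. In particular, the set of the top-3 vertices by individual grounded centrality, {3,4,5}, is not an optimal grounded set of size 3. -/

import Mathlib

open Matrix

/-- The grounded Laplacian matrix `L(S)`: the principal submatrix of the Laplacian matrix
`L = D - A` of `G` obtained by deleting the rows and columns indexed by the vertices in `S`. -/
noncomputable def groundedLaplacian {V : Type*} [Fintype V] [DecidableEq V]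
    (G : SimpleGraph V) (S : Finset V) :
    Matrix {v : V // v ∉ S} {v : V // v ∉ S} ℝ :=
  letI := Classical.decRel G.Adj
  Matrix.of fun i j => G.lapMatrix ℝ i.val j.val

/-- `λ(S)`: the smallest eigenvalue of the grounded Laplacian matrix `L(S)`. -/
noncomputable def lambdaMin {V : Type*} [Fintype V] [DecidableEq V]
    (G : SimpleGraph V) (S : Finset V) : ℝ :=
  sInf (spectrum ℝ (groundedLaplacian G S))

/-- The path graph `P₇` on the vertex set `{1,…,7}` (encoded as `Fin 7`, so that paper vertex
`i` corresponds to `(i-1 : Fin 7)`), with edges `{i, i+1}` for `i = 1,…,6`. -/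
def P7 : SimpleGraph (Fin 7) :=
  SimpleGraph.fromRel (fun i j => (i : ℕ) + 1 = (j : ℕ))

/-! ### Auxiliary material -/

section SpectrumHelpers

variable {n : Type*} [Fintype n] [DecidableEq n]

lemma charmap_eq (M : Matrix n n ℝ) (μ : ℝ) :
    (charmatrix M).map (Polynomial.eval μ) = Matrix.diagonal (fun _ => μ) - M := by
  ext i j
  by_cases h : i = j
  · subst h; simp [charmatrix_apply_eq]
  · simp [charmatrix_apply_ne _ _ _ h, Matrix.diagonal_apply_ne _ h]

lemma algebraMap_matrix_eq (μ : ℝ) :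
    (algebraMap ℝ (Matrix n n ℝ)) μ = Matrix.diagonal (fun _ => μ) := by
  ext i j
  by_cases h : i = j
  · subst h; simp [Matrix.algebraMap_matrix_apply]
  · simp [Matrix.algebraMap_matrix_apply, h, Matrix.diagonal_apply_ne _ h]

lemma mem_spectrum_iff_det (M : Matrix n n ℝ) (μ : ℝ) :
    μ ∈ spectrum ℝ M ↔ (Matrix.diagonal (fun _ => μ) - M).det = 0 := by
  rw [spectrum.mem_iff, Matrix.isUnit_iff_isUnit_det, isUnit_iff_ne_zero, not_ne_iff,
    algebraMap_matrix_eq]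

lemma spectrum_matrix_finite (M : Matrix n n ℝ) : (spectrum ℝ M).Finite := by
  apply Set.Finite.subset
    (Polynomial.finite_setOf_isRoot (p := M.charpoly) M.charpoly_monic.ne_zero)
  intro μ hμ
  rw [mem_spectrum_iff_det] at hμ
  have : M.charpoly.eval μ = 0 := by
    have h2 := congrArg Matrix.det (charmap_eq M μ)
    have h3 : (M.charmatrix.map (Polynomial.eval μ)).det
        = ((Polynomial.evalRingHom μ).mapMatrix M.charmatrix).det := rfl
    rw [h3, ← RingHom.map_det (Polynomial.evalRingHom μ)] at h2
    simpa [Matrix.charpoly, hμ] using h2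
  exact this

lemma spectrum_matrix_bddBelow (M : Matrix n n ℝ) : BddBelow (spectrum ℝ M) :=
  (spectrum_matrix_finite M).bddBelow

lemma rayleigh_le {M : Matrix n n ℝ} (hM : M.IsHermitian) {x : n → ℝ} (hx : x ≠ 0)
    {c : ℝ} (h : x ⬝ᵥ M.mulVec x ≤ c * (x ⬝ᵥ x)) :
    sInf (spectrum ℝ M) ≤ c := by
  have hxx : 0 < x ⬝ᵥ x := by
    rcases Function.ne_iff.mp hx with ⟨i, hi⟩
    simp only [Pi.zero_apply] at hi
    exact Finset.sum_pos' (fun j _ => mul_self_nonneg _)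
      ⟨i, Finset.mem_univ i, mul_self_pos.mpr hi⟩
  refine le_of_forall_pos_le_add fun ε hε => ?_
  set N : Matrix n n ℝ := M - (c + ε) • 1 with hN
  have hNh : N.IsHermitian := by
    rw [Matrix.IsHermitian, hN, conjTranspose_sub, conjTranspose_smul, conjTranspose_one, hM]
    norm_num
  have hq : x ⬝ᵥ N.mulVec x < 0 := by
    have hmv : N.mulVec x = M.mulVec x - (c+ε) • x := by
      rw [hN, Matrix.sub_mulVec, Matrix.smul_mulVec, Matrix.one_mulVec]
    rw [hmv, dotProduct_sub, dotProduct_smul, smul_eq_mul]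
    nlinarith [h]
  have hnotpsd : ¬ N.PosSemidef := by
    intro hpsd
    have := hpsd.dotProduct_mulVec_nonneg x
    simp only [star_trivial] at this
    exact absurd hq (not_lt.mpr (by simpa using this))
  have hex : ∃ i, hNh.eigenvalues i < 0 := by
    by_contra hall
    push_neg at hall
    exact hnotpsd (hNh.posSemidef_iff_eigenvalues_nonneg.mpr hall)
  obtain ⟨i, hi⟩ := hex
  have hmem : hNh.eigenvalues i ∈ spectrum ℝ N := hNh.eigenvalues_mem_spectrum_real i
  have hMN : (algebraMap ℝ (Matrix n n ℝ)) (c+ε) + N = M := by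
    rw [hN, Algebra.algebraMap_eq_smul_one]; abel
  have hmemM : hNh.eigenvalues i + (c + ε) ∈ spectrum ℝ M := by
    rw [← hMN]
    exact (spectrum.add_mem_add_iff).mpr hmem
  calc sInf (spectrum ℝ M) ≤ hNh.eigenvalues i + (c + ε) :=
        csInf_le (spectrum_matrix_bddBelow M) hmemM
    _ ≤ c + ε := by linarith

end SpectrumHelpers

instance P7dec : DecidableRel P7.Adj := fun a b =>
  decidable_of_iff (a ≠ b ∧ ((a:ℕ)+1 = b ∨ (b:ℕ)+1 = a))
    (by rw [P7, SimpleGraph.fromRel_adj])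

lemma P7_adj_iff (a b : Fin 7) : P7.Adj a b ↔ (a ≠ b ∧ ((a:ℕ)+1 = b ∨ (b:ℕ)+1 = a)) := by
  rw [P7, SimpleGraph.fromRel_adj]

/-- Explicit Laplacian matrix of `P7`. -/
def L7 : Matrix (Fin 7) (Fin 7) ℝ := Matrix.of fun i j =>
  (if (i:ℕ) = (j:ℕ) then (if (i:ℕ) = 0 ∨ (i:ℕ) = 6 then 1 else 2) else 0) -
  (if (i:ℕ)+1 = (j:ℕ) ∨ (j:ℕ)+1 = (i:ℕ) then 1 else 0)

lemma lap_eq : ∀ (inst : DecidableRel P7.Adj),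
    @SimpleGraph.lapMatrix (Fin 7) ℝ _ P7 inst _ _ = L7 := by
  intro inst
  have : inst = P7dec := Subsingleton.elim _ _
  subst this
  have hd : ∀ v : Fin 7, P7.degree v = if v = 0 ∨ v = 6 then 1 else 2 := by decide
  ext i j
  rw [SimpleGraph.lapMatrix, Matrix.sub_apply]
  fin_cases i <;> fin_cases j <;>
    simp [SimpleGraph.degMatrix, SimpleGraph.adjMatrix, Matrix.diagonal, L7, hd,
      P7_adj_iff] <;> decide

lemma grounded_apply (S : Finset (Fin 7)) (i j : {v : Fin 7 // v ∉ S}) :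
    groundedLaplacian P7 S i j = L7 i.val j.val := by
  simp only [groundedLaplacian, Matrix.of_apply]
  rw [lap_eq]

lemma L7_symm (i j : Fin 7) : L7 j i = L7 i j := by
  have h : L7.IsSymm := by
    letI inst : DecidableRel P7.Adj := Classical.decRel P7.Adj
    rw [← lap_eq inst]
    exact P7.isSymm_lapMatrix ℝ
  exact h.apply i j

lemma grounded_herm (S : Finset (Fin 7)) : (groundedLaplacian P7 S).IsHermitian := by
  ext i j
  simp only [conjTranspose_apply, star_trivial, grounded_apply]
  exact L7_symm _ _

lemma sum_subtype_eq (S : Finset (Fin 7)) (f : Fin 7 → ℝ) (hf : ∀ v ∈ S, f v = 0) :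
    ∑ i : {v : Fin 7 // v ∉ S}, f i.val = ∑ v : Fin 7, f v := by
  rw [← Finset.sum_subtype (Finset.univ.filter (· ∉ S)) (by simp) f]
  exact Finset.sum_subset (Finset.filter_subset _ _)
    (fun x _ hx => hf x (by simpa using hx))

lemma lambdaMin_le_of_vec (S : Finset (Fin 7)) (y : Fin 7 → ℝ) (hS : ∀ v ∈ S, y v = 0)
    (hy : y ≠ 0) (c : ℝ) (h : y ⬝ᵥ L7.mulVec y ≤ c * (y ⬝ᵥ y)) : lambdaMin P7 S ≤ c := by
  set x : {v : Fin 7 // v ∉ S} → ℝ := fun i => y i.val with hxdef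
  have hx : x ≠ 0 := by
    rcases Function.ne_iff.mp hy with ⟨v, hv⟩
    simp only [Pi.zero_apply] at hv
    have hvS : v ∉ S := fun hmem => hv (hS v hmem)
    exact Function.ne_iff.mpr ⟨⟨v, hvS⟩, hv⟩
  have hmv : ∀ i : {v : Fin 7 // v ∉ S},
      (groundedLaplacian P7 S).mulVec x i = L7.mulVec y i.val := by
    intro i
    show ∑ j : {v : Fin 7 // v ∉ S}, groundedLaplacian P7 S i j * x j = _
    calc ∑ j : {v : Fin 7 // v ∉ S}, groundedLaplacian P7 S i j * x j
        = ∑ j : {v : Fin 7 // v ∉ S}, L7 i.val j.val * y j.val := by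
          simp [grounded_apply, hxdef]
      _ = ∑ v : Fin 7, L7 i.val v * y v :=
          sum_subtype_eq S (fun v => L7 i.val v * y v) (fun v hv => by simp [hS v hv])
      _ = L7.mulVec y i.val := rfl
  have hquad : x ⬝ᵥ (groundedLaplacian P7 S).mulVec x = y ⬝ᵥ L7.mulVec y := by
    calc x ⬝ᵥ (groundedLaplacian P7 S).mulVec x
        = ∑ i : {v : Fin 7 // v ∉ S}, y i.val * L7.mulVec y i.val := by
          simp only [dotProduct]
          exact Finset.sum_congr rfl fun i _ => by rw [hmv i]
      _ = ∑ v : Fin 7, y v * L7.mulVec y v :=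
          sum_subtype_eq S (fun v => y v * L7.mulVec y v) (fun v hv => by simp [hS v hv])
      _ = y ⬝ᵥ L7.mulVec y := rfl
  have hnorm : x ⬝ᵥ x = y ⬝ᵥ y :=
    sum_subtype_eq S (fun v => y v * y v) (fun v hv => by simp [hS v hv])
  exact rayleigh_le (grounded_herm S) hx (by rw [hquad, hnorm]; exact h)

lemma spectrum_grounded_eq (S : Finset (Fin 7)) (d : Fin 4 → Fin 7)
    (hd : ∀ i, d i ∉ S) (hinj : Function.Injective d)
    (hcard : Fintype.card {v : Fin 7 // v ∉ S} = 4) :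
    spectrum ℝ (groundedLaplacian P7 S) =
      spectrum ℝ (Matrix.of fun i j : Fin 4 => L7 (d i) (d j)) := by
  set emb : Fin 4 → {v : Fin 7 // v ∉ S} := fun i => ⟨d i, hd i⟩ with hemb
  have hembinj : Function.Injective emb := fun i j h => hinj (congrArg Subtype.val h)
  have hbij : Function.Bijective emb :=
    (Fintype.bijective_iff_injective_and_card emb).mpr ⟨hembinj, by simp [hcard]⟩
  set e : {v : Fin 7 // v ∉ S} ≃ Fin 4 := (Equiv.ofBijective emb hbij).symm with he
  have h1 : (Matrix.reindexAlgEquiv ℝ ℝ e) (groundedLaplacian P7 S) =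
      Matrix.of fun i j : Fin 4 => L7 (d i) (d j) := by
    ext i j
    simp only [Matrix.reindexAlgEquiv_apply, Matrix.reindex_apply, Matrix.submatrix_apply,
      Matrix.of_apply]
    rw [grounded_apply]
    congr 1
  rw [← AlgEquiv.spectrum_eq (Matrix.reindexAlgEquiv ℝ ℝ e) (groundedLaplacian P7 S), h1]

lemma lambdaMin_135 : lambdaMin P7 ({1, 3, 5} : Finset (Fin 7)) = 1 := by
  have hcard : Fintype.card {v : Fin 7 // v ∉ ({1,3,5} : Finset (Fin 7))} = 4 := by
    rw [Fintype.card_subtype]; decide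
  have hspec := spectrum_grounded_eq ({1,3,5} : Finset (Fin 7)) ![0,2,4,6]
    (by decide) (by decide) hcard
  have hmat : (Matrix.of fun i j : Fin 4 => L7 (![0,2,4,6] i) (![0,2,4,6] j))
      = Matrix.diagonal ![(1:ℝ),2,2,1] := by
    ext i j
    fin_cases i <;> fin_cases j <;>
      simp (config := {decide := true}) [L7, Matrix.diagonal, Matrix.vecHead, Matrix.vecTail] <;>
      norm_num
  have hset : spectrum ℝ (Matrix.diagonal ![(1:ℝ),2,2,1]) = {1, 2} := by
    rw [spectrum_diagonal]
    ext x
    constructor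
    · rintro ⟨i, rfl⟩
      fin_cases i <;> simp
    · rintro (rfl | rfl)
      · exact ⟨0, rfl⟩
      · exact ⟨1, rfl⟩
  rw [lambdaMin, hspec, hmat, hset, csInf_pair]
  norm_num

lemma lambdaMin_234 : lambdaMin P7 ({2, 3, 4} : Finset (Fin 7)) = (3 - Real.sqrt 5) / 2 := by
  have hs : Real.sqrt 5 ^ 2 = 5 := Real.sq_sqrt (by norm_num)
  set a : ℝ := (3 - Real.sqrt 5) / 2 with ha
  set b : ℝ := (3 + Real.sqrt 5) / 2 with hb
  have hcard : Fintype.card {v : Fin 7 // v ∉ ({2,3,4} : Finset (Fin 7))} = 4 := by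
    rw [Fintype.card_subtype]; decide
  have hspec := spectrum_grounded_eq ({2,3,4} : Finset (Fin 7)) ![0,1,5,6]
    (by decide) (by decide) hcard
  have hmat : (Matrix.of fun i j : Fin 4 => L7 (![0,1,5,6] i) (![0,1,5,6] j))
      = !![1,-1,0,0; -1,2,0,0; 0,0,2,-1; 0,0,-1,1] := by
    ext i j
    fin_cases i <;> fin_cases j <;>
      simp (config := {decide := true}) [L7, Matrix.vecHead, Matrix.vecTail] <;> norm_num
  have hset : spectrum ℝ (!![1,-1,0,0; -1,2,0,0; 0,0,2,-1; 0,0,-1,1] : Matrix (Fin 4) (Fin 4) ℝ)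
      = {a, b} := by
    ext μ
    rw [mem_spectrum_iff_det]
    have hdet : (Matrix.diagonal (fun _ => μ) - !![1,-1,0,0; -1,2,0,0; 0,0,2,-1; 0,0,-1,1]).det
        = ((μ - a) * (μ - b))^2 := by
      have hm : (Matrix.diagonal (fun _ => μ) - !![1,-1,0,0; -1,2,0,0; 0,0,2,-1; 0,0,-1,1])
          = !![μ-1,1,0,0; 1,μ-2,0,0; 0,0,μ-2,1; 0,0,1,μ-1] := by
        ext i j
        fin_cases i <;> fin_cases j <;>
          simp (config := {decide := true}) [Matrix.diagonal, Matrix.vecHead, Matrix.vecTail] <;>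
          norm_num
      rw [hm]
      rw [Matrix.det_succ_row_zero]
      simp [Fin.sum_univ_succ, Matrix.det_fin_three, Fin.succAbove, ha, hb]
      ring_nf
      have hs4 : Real.sqrt 5 ^ 4 = 25 := by
        have : Real.sqrt 5 ^ 4 = (Real.sqrt 5 ^ 2) ^ 2 := by ring
        rw [this, hs]; norm_num
      rw [hs4, hs]; ring
    rw [hdet, Set.mem_insert_iff, Set.mem_singleton_iff,
      pow_eq_zero_iff (two_ne_zero), mul_eq_zero, sub_eq_zero, sub_eq_zero]
  have hab : a ≤ b := by
    have := Real.sqrt_nonneg 5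
    rw [ha, hb]; linarith
  rw [lambdaMin, hspec, hmat, hset, csInf_pair]
  exact min_eq_left hab

lemma lambdaMin_le_one (S : Finset (Fin 7)) (hcard : S.card = 3) : lambdaMin P7 S ≤ 1 := by
  by_cases h0 : (0 : Fin 7) ∈ S
  · by_cases h6 : (6 : Fin 7) ∈ S
    · -- both endpoints grounded; use a pair of adjacent interior vertices
      by_cases h3 : (3 : Fin 7) ∈ S
      · have hSeq : ({0, 3, 6} : Finset (Fin 7)) = S := by
          apply Finset.eq_of_subset_of_card_le
          · intro x hx
            simp only [Finset.mem_insert, Finset.mem_singleton] at hx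
            rcases hx with rfl | rfl | rfl <;> assumption
          · rw [hcard]; decide
        refine lambdaMin_le_of_vec S (fun w => if w = 1 ∨ w = 2 then 1 else 0) ?_ ?_ 1 ?_
        · intro v hv
          rw [← hSeq] at hv
          fin_cases hv <;> norm_num <;> decide
        · intro hzero
          have := congrFun hzero 1
          norm_num at this
        · simp (config := {decide := true}) only [dotProduct, mulVec, Fin.sum_univ_seven, L7,
            Matrix.of_apply]
          norm_num
      · by_cases h4 : (4 : Fin 7) ∈ S
        · have hSeq : ({0, 4, 6} : Finset (Fin 7)) = S := by
            apply Finset.eq_of_subset_of_card_le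
            · intro x hx
              simp only [Finset.mem_insert, Finset.mem_singleton] at hx
              rcases hx with rfl | rfl | rfl <;> assumption
            · rw [hcard]; decide
          refine lambdaMin_le_of_vec S (fun w => if w = 1 ∨ w = 2 then 1 else 0) ?_ ?_ 1 ?_
          · intro v hv
            rw [← hSeq] at hv
            fin_cases hv <;> norm_num <;> decide
          · intro hzero
            have := congrFun hzero 1
            norm_num at this
          · simp (config := {decide := true}) only [dotProduct, mulVec, Fin.sum_univ_seven, L7,
              Matrix.of_apply]
            norm_num
        · refine lambdaMin_le_of_vec S (fun w => if w = 3 ∨ w = 4 then 1 else 0) ?_ ?_ 1 ?_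
          · intro v hv
            have h3' : v ≠ 3 := fun h => h3 (h ▸ hv)
            have h4' : v ≠ 4 := fun h => h4 (h ▸ hv)
            simp [h3', h4']
          · intro hzero
            have := congrFun hzero 3
            norm_num at this
          · simp (config := {decide := true}) only [dotProduct, mulVec, Fin.sum_univ_seven, L7,
              Matrix.of_apply]
            norm_num
    · -- vertex 6 remains; it has degree 1
      refine lambdaMin_le_of_vec S (fun w => if w = 6 then 1 else 0) ?_ ?_ 1 ?_
      · intro v hv
        have h6' : v ≠ 6 := fun h => h6 (h ▸ hv)
        simp [h6']
      · intro hzero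
        have := congrFun hzero 6
        norm_num at this
      · simp (config := {decide := true}) only [dotProduct, mulVec, Fin.sum_univ_seven, L7,
          Matrix.of_apply]
        norm_num
  · -- vertex 0 remains; it has degree 1
    refine lambdaMin_le_of_vec S (fun w => if w = 0 then 1 else 0) ?_ ?_ 1 ?_
    · intro v hv
      have h0' : v ≠ 0 := fun h => h0 (h ▸ hv)
      simp [h0']
    · intro hzero
      have := congrFun hzero 0
      norm_num at this
    · simp (config := {decide := true}) only [dotProduct, mulVec, Fin.sum_univ_seven, L7,
        Matrix.of_apply]
      norm_num

/-- On the path `P₇` (paper vertices `{1,…,7}`, here shifted down by one to `Fin 7`):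
`λ({2,4,6}) = 1`, `λ({3,4,5}) = (3 − √5)/2`, hence `λ({2,4,6}) > λ({3,4,5})`; moreover
`{2,4,6}` is optimal among all three-element grounded sets. In particular the set `{3,4,5}` of
the top-3 vertices by individual grounded centrality is not an optimal grounded set of size 3. -/
theorem P7_optimal_grounded_set :
    lambdaMin P7 ({1, 3, 5} : Finset (Fin 7)) = 1 ∧
    lambdaMin P7 ({2, 3, 4} : Finset (Fin 7)) = (3 - Real.sqrt 5) / 2 ∧
    lambdaMin P7 ({2, 3, 4} : Finset (Fin 7)) < lambdaMin P7 ({1, 3, 5} : Finset (Fin 7)) ∧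
    ∀ S : Finset (Fin 7), S.card = 3 →
      lambdaMin P7 S ≤ lambdaMin P7 ({1, 3, 5} : Finset (Fin 7)) := by
  have h1 := lambdaMin_135
  have h2 := lambdaMin_234
  refine ⟨h1, h2, ?_, ?_⟩
  · rw [h1, h2]
    have hs : Real.sqrt 5 ^ 2 = 5 := Real.sq_sqrt (by norm_num)
    have hnn : 0 ≤ Real.sqrt 5 := Real.sqrt_nonneg 5
    nlinarith
  · intro S hS
    rw [h1]
    exact lambdaMin_le_one S hS
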